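/- arXiv:1503.08186 — 4 statements merged into one kernel-verified Lean document; each statement's English description precedes it below -/
import Mathlib

section
/- The restricted symplectic group Sp₂(H) = {g ∈ Sp(H) : g - 1 is Hilbert-Schmidt} is a complete metric space under the distance d(g₁, g₂) = ‖g₁ - g₂‖₂, where ‖·‖₂ is the Hilbert-Schmidt norm. In particular, if (xₙ) ⊂ Sp₂(H) is Cauchy in ‖·‖₂, its limit x₀ = lim xₙ is invertible with inverse x₀⁻¹ = -J x₀* J, and x₀ ∈ Sp₂(H). -/
open scoped RealInnerProductSpace
open ContinuousLinearMap

noncomputable section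

variable {ι H : Type*} [NormedAddCommGroup H] [InnerProductSpace ℝ H] [CompleteSpace H]

/-- `x` is a Hilbert-Schmidt operator (with respect to the Hilbert basis `b`). -/
def IsHS (b : HilbertBasis ι ℝ H) (x : H →L[ℝ] H) : Prop :=
  Summable fun i => ‖x (b i)‖ ^ 2

/-- The Hilbert-Schmidt norm `‖x‖₂`. -/
def hsNorm (b : HilbertBasis ι ℝ H) (x : H →L[ℝ] H) : ℝ :=
  Real.sqrt (∑' i, ‖x (b i)‖ ^ 2)

/-- The trace inner product `⟨x, y⟩ = Tr (y* x)`. -/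
def hsInner (b : HilbertBasis ι ℝ H) (x y : H →L[ℝ] H) : ℝ :=
  ∑' i, ⟪x (b i), y (b i)⟫

/-- `J` is a complex structure: `J² = -1` and `J* = -J`. -/
def IsCplxStruct (J : H →L[ℝ] H) : Prop :=
  J * J = -1 ∧ star J = -J

/-- The symplectic group `Sp(H)`. -/
def Sp (J : H →L[ℝ] H) : Set (H →L[ℝ] H) :=
  {g | IsUnit g ∧ star g * J * g = J}

/-- The restricted symplectic group `Sp₂(H)`. -/
def Sp2 (b : HilbertBasis ι ℝ H) (J : H →L[ℝ] H) : Set (H →L[ℝ] H) :=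
  {g | g ∈ Sp J ∧ IsHS b (g - 1)}

/-- The Banach-Lie algebra `sp₂(H) = {x ∈ B₂(H) : xJ = -Jx*}`. -/
def sp2 (b : HilbertBasis ι ℝ H) (J : H →L[ℝ] H) : Set (H →L[ℝ] H) :=
  {x | IsHS b x ∧ x * J = -(J * star x)}

/-- The Hermitian part of `sp₂(H)`. -/
def sp2h (b : HilbertBasis ι ℝ H) (J : H →L[ℝ] H) : Set (H →L[ℝ] H) :=
  {x ∈ sp2 b J | IsSelfAdjoint x}

/-- The anti-Hermitian part of `sp₂(H)`. -/
def sp2ah (b : HilbertBasis ι ℝ H) (J : H →L[ℝ] H) : Set (H →L[ℝ] H) :=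
  {x ∈ sp2 b J | star x = -x}

/-- The positive part `Sp₂⁺(H)` of the restricted symplectic group. -/
def Sp2pos (b : HilbertBasis ι ℝ H) (J : H →L[ℝ] H) : Set (H →L[ℝ] H) :=
  {g ∈ Sp2 b J | g.IsPositive}

/-- The restricted unitary group `U₂(H_J)` of unitaries commuting with `J` which are
Hilbert-Schmidt perturbations of the identity. -/
def U2J (b : HilbertBasis ι ℝ H) (J : H →L[ℝ] H) : Set (H →L[ℝ] H) :=
  {u | star u * u = 1 ∧ u * star u = 1 ∧ u * J = J * u ∧ IsHS b (u - 1)}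

open scoped Classical in
/-- The positive square root `a^{1/2}` of a positive operator (junk value otherwise). -/
def psqrt (a : H →L[ℝ] H) : H →L[ℝ] H :=
  if h : ∃ s : H →L[ℝ] H, s.IsPositive ∧ s * s = a then h.choose else 0

/-- A piecewise smooth curve parametrized on `[0,1]`. -/
def PiecewiseSmooth (α : ℝ → (H →L[ℝ] H)) : Prop :=
  ContinuousOn α (Set.Icc 0 1) ∧ ∃ n : ℕ, ∃ t : Fin (n + 1) → ℝ,
    StrictMono t ∧ t 0 = 0 ∧ t (Fin.last n) = 1 ∧
    ∀ i : Fin n, ContDiffOn ℝ 1 α (Set.Icc (t i.castSucc) (t i.succ))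

/-- Length of a curve with respect to a metric `F` on tangent vectors. -/
def lengthWith (F : (H →L[ℝ] H) → (H →L[ℝ] H) → ℝ) (α : ℝ → (H →L[ℝ] H)) : ℝ :=
  ∫ t in (0:ℝ)..1, F (α t) (deriv α t)

/-- Piecewise smooth curves inside `S` joining `p` to `q`. -/
def pathsIn (S : Set (H →L[ℝ] H)) (p q : H →L[ℝ] H) : Set (ℝ → (H →L[ℝ] H)) :=
  {α | PiecewiseSmooth α ∧ (∀ t ∈ Set.Icc (0:ℝ) 1, α t ∈ S) ∧ α 0 = p ∧ α 1 = q}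

/-- The geodesic distance in `S` associated to the metric `F`. -/
def gdist (S : Set (H →L[ℝ] H)) (F : (H →L[ℝ] H) → (H →L[ℝ] H) → ℝ)
    (p q : H →L[ℝ] H) : ℝ :=
  sInf (lengthWith F '' pathsIn S p q)

/-- The left invariant metric `I(g,v) = ‖g⁻¹ v‖₂`. -/
def leftMet (b : HilbertBasis ι ℝ H) : (H →L[ℝ] H) → (H →L[ℝ] H) → ℝ :=
  fun g v => hsNorm b (Ring.inverse g * v)

/-- The metric of positive operators `𝔭(a,x) = ‖a^{-1/2} x a^{-1/2}‖₂`. -/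
def posMet (b : HilbertBasis ι ℝ H) : (H →L[ℝ] H) → (H →L[ℝ] H) → ℝ :=
  fun a x => hsNorm b (Ring.inverse (psqrt a) * x * Ring.inverse (psqrt a))

/-- The ambient metric `𝔭_amb(g,x) = ‖x‖₂`. -/
def ambMet (b : HilbertBasis ι ℝ H) : (H →L[ℝ] H) → (H →L[ℝ] H) → ℝ :=
  fun _ x => hsNorm b x


section AuxLemmas

variable {ι H : Type*} [NormedAddCommGroup H] [InnerProductSpace ℝ H] [CompleteSpace H]

lemma isHS_neg {b : HilbertBasis ι ℝ H} {u : H →L[ℝ] H} (hu : IsHS b u) : IsHS b (-u) := by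
  simpa [IsHS] using hu

lemma isHS_add {b : HilbertBasis ι ℝ H} {u v : H →L[ℝ] H} (hu : IsHS b u) (hv : IsHS b v) :
    IsHS b (u + v) := by
  have hsum : Summable fun i => 2 * ‖u (b i)‖ ^ 2 + 2 * ‖v (b i)‖ ^ 2 :=
    (hu.mul_left 2).add (hv.mul_left 2)
  refine Summable.of_nonneg_of_le (fun i => by positivity) (fun i => ?_) hsum
  have h1 : ‖(u + v) (b i)‖ ≤ ‖u (b i)‖ + ‖v (b i)‖ := by
    simpa using norm_add_le (u (b i)) (v (b i))
  have h2 : ‖(u + v) (b i)‖ ^ 2 ≤ (‖u (b i)‖ + ‖v (b i)‖) ^ 2 :=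
    pow_le_pow_left₀ (norm_nonneg _) h1 2
  nlinarith [h2, sq_nonneg (‖u (b i)‖ - ‖v (b i)‖)]

lemma isHS_sub {b : HilbertBasis ι ℝ H} {u v : H →L[ℝ] H} (hu : IsHS b u) (hv : IsHS b v) :
    IsHS b (u - v) := by
  simpa [sub_eq_add_neg] using isHS_add hu (isHS_neg hv)

lemma hsNorm_nonneg (b : HilbertBasis ι ℝ H) (a : H →L[ℝ] H) : 0 ≤ hsNorm b a :=
  Real.sqrt_nonneg _

lemma norm_apply_le_hsNorm (b : HilbertBasis ι ℝ H) {a : H →L[ℝ] H} (ha : IsHS b a) (v : H) :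
    ‖a v‖ ≤ hsNorm b a * ‖v‖ := by
  set f : ι → ℝ := fun i => ‖b.repr v i‖ with hf
  set g : ι → ℝ := fun i => ‖a (b i)‖ with hg
  have hf2 : Summable fun i => f i ^ 2 := by
    simpa [hf, b.repr_apply_apply] using b.orthonormal.inner_products_summable v
  have hg2 : Summable fun i => g i ^ 2 := ha
  have hfg : Summable fun i => f i * g i := by
    refine Summable.of_nonneg_of_le (fun i => mul_nonneg (norm_nonneg _) (norm_nonneg _))
      (fun i => ?_) ((hf2.add hg2).mul_left (1 / 2))
    nlinarith [sq_nonneg (f i - g i)]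
  have hsum : HasSum (fun i => b.repr v i • a (b i)) (a v) := by
    simpa using (b.hasSum_repr v).mapL a
  have hnorm : ∀ i, ‖b.repr v i • a (b i)‖ = f i * g i := fun i => by
    simp [hf, hg, norm_smul]
  have h1 : ‖a v‖ ≤ ∑' i, f i * g i := by
    rw [← hsum.tsum_eq]
    calc ‖∑' i, b.repr v i • a (b i)‖ ≤ ∑' i, ‖b.repr v i • a (b i)‖ :=
          norm_tsum_le_tsum_norm (by simpa only [hnorm] using hfg)
      _ = ∑' i, f i * g i := by simp_rw [hnorm]
  have h2 : ∑' i, f i * g i ≤ Real.sqrt (∑' i, f i ^ 2) * Real.sqrt (∑' i, g i ^ 2) := by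
    refine Summable.tsum_le_of_sum_le hfg fun s => ?_
    refine (Real.sum_mul_le_sqrt_mul_sqrt s f g).trans ?_
    exact mul_le_mul (Real.sqrt_le_sqrt (Summable.sum_le_tsum s (fun i _ => sq_nonneg _) hf2))
      (Real.sqrt_le_sqrt (Summable.sum_le_tsum s (fun i _ => sq_nonneg _) hg2))
      (Real.sqrt_nonneg _) (Real.sqrt_nonneg _)
  have h3 : Real.sqrt (∑' i, f i ^ 2) ≤ ‖v‖ := by
    rw [show ‖v‖ = Real.sqrt (‖v‖ ^ 2) from (Real.sqrt_sq (norm_nonneg v)).symm]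
    refine Real.sqrt_le_sqrt ?_
    simpa [hf, b.repr_apply_apply] using b.orthonormal.tsum_inner_products_le v
  calc ‖a v‖ ≤ Real.sqrt (∑' i, f i ^ 2) * Real.sqrt (∑' i, g i ^ 2) := h1.trans h2
    _ ≤ ‖v‖ * Real.sqrt (∑' i, g i ^ 2) :=
        mul_le_mul_of_nonneg_right h3 (Real.sqrt_nonneg _)
    _ = hsNorm b a * ‖v‖ := by rw [hsNorm, mul_comm]

lemma opNorm_le_hsNorm (b : HilbertBasis ι ℝ H) {a : H →L[ℝ] H} (ha : IsHS b a) :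
    ‖a‖ ≤ hsNorm b a :=
  ContinuousLinearMap.opNorm_le_bound a (hsNorm_nonneg b a) (norm_apply_le_hsNorm b ha)

lemma left_inv_of_symp {J g : H →L[ℝ] H} (hJ2 : J * J = -1) (hg : star g * J * g = J) :
    (-(J * star g * J)) * g = 1 := by
  have : (-(J * star g * J)) * g = -(J * (star g * J * g)) := by
    rw [neg_mul, mul_assoc J (star g) J, mul_assoc]
  rw [this, hg, hJ2, neg_neg]

lemma right_inv_of_symp {J g : H →L[ℝ] H} (hJ2 : J * J = -1) (hu : IsUnit g)
    (hg : star g * J * g = J) : g * (-(J * star g * J)) = 1 := by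
  have hl := left_inv_of_symp hJ2 hg
  obtain ⟨u, rfl⟩ := hu
  have : (-(J * star (u : H →L[ℝ] H) * J)) = ↑u⁻¹ := by
    calc (-(J * star (u : H →L[ℝ] H) * J))
        = (-(J * star (u : H →L[ℝ] H) * J)) * (↑u * ↑u⁻¹) := by rw [u.mul_inv, mul_one]
      _ = ((-(J * star (u : H →L[ℝ] H) * J)) * ↑u) * ↑u⁻¹ := (mul_assoc _ _ _).symm
      _ = ↑u⁻¹ := by rw [hl, one_mul]
  rw [this, u.mul_inv]

end AuxLemmas


/-- `(Sp₂(H), ‖·‖₂)` is complete; the limit of a Cauchy sequence is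
invertible with inverse `-J x₀* J` and belongs to `Sp₂(H)`. -/
theorem Sp2_complete_hsNorm (b : HilbertBasis ι ℝ H) (J : H →L[ℝ] H)
    (hJ : IsCplxStruct J) (x : ℕ → H →L[ℝ] H) (hx : ∀ n, x n ∈ Sp2 b J)
    (hcauchy : ∀ ε > 0, ∃ N, ∀ m ≥ N, ∀ n ≥ N, hsNorm b (x m - x n) < ε) :
    ∃ x₀ ∈ Sp2 b J,
      Filter.Tendsto (fun n => hsNorm b (x n - x₀)) Filter.atTop (nhds 0) ∧
      x₀ * (-(J * star x₀ * J)) = 1 ∧ (-(J * star x₀ * J)) * x₀ = 1 := by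
  obtain ⟨hJ2, hJstar⟩ := hJ
  have hxHS : ∀ n, IsHS b (x n - 1) := fun n => (hx n).2
  have hsub : ∀ m n, IsHS b (x m - x n) := fun m n => by
    simpa using isHS_sub (hxHS m) (hxHS n)
  -- Cauchy in operator norm
  have hc : CauchySeq x := by
    rw [Metric.cauchySeq_iff]
    intro ε hε
    obtain ⟨N, hN⟩ := hcauchy ε hε
    exact ⟨N, fun m hm n hn => by
      rw [dist_eq_norm]
      exact lt_of_le_of_lt (opNorm_le_hsNorm b (hsub m n)) (hN m hm n hn)⟩
  obtain ⟨x₀, hx₀⟩ := cauchySeq_tendsto_of_complete hc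
  have happ : ∀ v : H, Filter.Tendsto (fun n => x n v) Filter.atTop (nhds (x₀ v)) := fun v =>
    ((ContinuousLinearMap.apply ℝ H v).continuous.tendsto x₀).comp hx₀
  -- quantitative limit estimate
  have key : ∀ ε > 0, ∃ N, ∀ n ≥ N,
      Summable (fun i => ‖(x₀ - x n) (b i)‖ ^ 2) ∧
      (∑' i, ‖(x₀ - x n) (b i)‖ ^ 2) ≤ ε ^ 2 := by
    intro ε hε
    obtain ⟨N, hN⟩ := hcauchy ε hε
    refine ⟨N, fun n hn => ?_⟩
    have hpart : ∀ s : Finset ι, ∑ i ∈ s, ‖(x₀ - x n) (b i)‖ ^ 2 ≤ ε ^ 2 := by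
      intro s
      have hlim : Filter.Tendsto (fun m => ∑ i ∈ s, ‖(x m - x n) (b i)‖ ^ 2) Filter.atTop
          (nhds (∑ i ∈ s, ‖(x₀ - x n) (b i)‖ ^ 2)) := by
        refine tendsto_finset_sum _ fun i _ => ?_
        have h1 : Filter.Tendsto (fun m => (x m - x n) (b i)) Filter.atTop
            (nhds ((x₀ - x n) (b i))) := by
          simp only [ContinuousLinearMap.sub_apply]
          exact (happ (b i)).sub tendsto_const_nhds
        exact (h1.norm).pow 2
      refine le_of_tendsto hlim (Filter.eventually_atTop.2 ⟨N, fun m hm => ?_⟩)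
      have h2 : hsNorm b (x m - x n) < ε := hN m hm n hn
      have h4 : (∑' i, ‖(x m - x n) (b i)‖ ^ 2) ≤ ε ^ 2 := by
        have ht : (0:ℝ) ≤ ∑' i, ‖(x m - x n) (b i)‖ ^ 2 :=
          tsum_nonneg fun i => sq_nonneg _
        have := h2
        rw [hsNorm] at this
        nlinarith [Real.sq_sqrt ht, Real.sqrt_nonneg (∑' i, ‖(x m - x n) (b i)‖ ^ 2)]
      exact (Summable.sum_le_tsum s (fun i _ => sq_nonneg _) (hsub m n)).trans h4
    have hsummable : Summable fun i => ‖(x₀ - x n) (b i)‖ ^ 2 :=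
      summable_of_sum_le (fun i => sq_nonneg _) hpart
    exact ⟨hsummable, Summable.tsum_le_of_sum_le hsummable hpart⟩
  have key' : ∀ ε > 0, ∃ N, ∀ n ≥ N, IsHS b (x₀ - x n) ∧ hsNorm b (x₀ - x n) ≤ ε := by
    intro ε hε
    obtain ⟨N, hN⟩ := key ε hε
    refine ⟨N, fun n hn => ⟨(hN n hn).1, ?_⟩⟩
    rw [hsNorm, show ε = Real.sqrt (ε ^ 2) from (Real.sqrt_sq hε.le).symm]
    exact Real.sqrt_le_sqrt (hN n hn).2
  -- x₀ - 1 is Hilbert-Schmidt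
  obtain ⟨N₁, hN₁⟩ := key' 1 one_pos
  have hHS01 : IsHS b (x₀ - 1) := by
    have := isHS_add (hN₁ N₁ le_rfl).1 (hxHS N₁)
    simpa using this
  -- hsNorm convergence
  have htend : Filter.Tendsto (fun n => hsNorm b (x n - x₀)) Filter.atTop (nhds 0) := by
    rw [Metric.tendsto_atTop]
    intro ε hε
    obtain ⟨N, hN⟩ := key' (ε / 2) (by linarith)
    refine ⟨N, fun n hn => ?_⟩
    have heq : hsNorm b (x n - x₀) = hsNorm b (x₀ - x n) := by
      rw [hsNorm, hsNorm]
      congr 1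
      refine tsum_congr fun i => ?_
      rw [show (x n - x₀) (b i) = -((x₀ - x n) (b i)) by simp, norm_neg]
    rw [Real.dist_eq, sub_zero, abs_of_nonneg (hsNorm_nonneg b _), heq]
    linarith [(hN n hn).2]
  -- star convergence and symplectic relation
  have hstar : Filter.Tendsto (fun n => star (x n)) Filter.atTop (nhds (star x₀)) :=
    (continuous_star.tendsto x₀).comp hx₀
  have hsympl₀ : star x₀ * J * x₀ = J := by
    have h1 : Filter.Tendsto (fun n => star (x n) * J * x n) Filter.atTop
        (nhds (star x₀ * J * x₀)) := (hstar.mul tendsto_const_nhds).mul hx₀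
    have heq : (fun n => star (x n) * J * x n) = fun _ => J :=
      funext fun n => (hx n).1.2
    rw [heq] at h1
    exact tendsto_nhds_unique h1 tendsto_const_nhds
  have hleft : (-(J * star x₀ * J)) * x₀ = 1 := left_inv_of_symp hJ2 hsympl₀
  have hright : x₀ * (-(J * star x₀ * J)) = 1 := by
    have h1 : Filter.Tendsto (fun n => x n * (-(J * star (x n) * J))) Filter.atTop
        (nhds (x₀ * (-(J * star x₀ * J)))) :=
      hx₀.mul (((tendsto_const_nhds.mul hstar).mul tendsto_const_nhds).neg)
    have heq : (fun n => x n * (-(J * star (x n) * J))) = fun _ => (1 : H →L[ℝ] H) :=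
      funext fun n => right_inv_of_symp hJ2 (hx n).1.1 (hx n).1.2
    rw [heq] at h1
    exact tendsto_nhds_unique h1 tendsto_const_nhds
  exact ⟨x₀, ⟨⟨isUnit_iff_exists.mpr ⟨-(J * star x₀ * J), hright, hleft⟩, hsympl₀⟩, hHS01⟩,
    htend, hright, hleft⟩


end
end

section
/- If x is a Hilbert-Schmidt operator on H satisfying xJ = -Jx*, then the operator exponential e^x belongs to Sp₂(H); that is, e^x is invertible, (e^x)* J e^x = J, and e^x - 1 is Hilbert-Schmidt. -/
open scoped RealInnerProductSpace
open ContinuousLinearMap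

noncomputable section

variable {ι H : Type*} [NormedAddCommGroup H] [InnerProductSpace ℝ H] [CompleteSpace H]

/-! With `J² = -1`, the condition `xJ = -Jx*` says `Jx = -x*J`, so `J` intertwines the
exponential series of `x` and of `-x*`: `J eˣ = e^{-x*} J = ((eˣ)*)⁻¹ J`, i.e. `(eˣ)* J eˣ = J`.
Moreover `eˣ - 1 = (∑ xⁿ/(n+1)!) x` is a bounded operator times a Hilbert-Schmidt one. -/

omit [CompleteSpace H] in
theorem IsHS.mul_left {b : HilbertBasis ι ℝ H} {x : H →L[ℝ] H} (hx : IsHS b x) (y : H →L[ℝ] H) :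
    IsHS b (y * x) := by
  refine .of_nonneg_of_le (fun i => by positivity) (fun i => ?_) (Summable.mul_left (‖y‖ ^ 2) hx)
  calc ‖(y * x) (b i)‖ ^ 2 ≤ (‖y‖ * ‖x (b i)‖) ^ 2 := by gcongr; exact y.le_opNorm _
    _ = ‖y‖ ^ 2 * ‖x (b i)‖ ^ 2 := mul_pow _ _ _

namespace NormedSpace

open Nat

variable {𝔸 : Type*} [NormedRing 𝔸] [NormedAlgebra ℚ 𝔸] [CompleteSpace 𝔸]

theorem summable_inv_factorial_succ_smul_pow (x : 𝔸) :
    Summable fun n => ((n + 1)!⁻¹ : ℚ) • x ^ n := by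
  refine .of_norm_bounded (norm_expSeries_summable' (𝕂 := ℚ) x) fun n => ?_
  rw [norm_smul, norm_smul]
  gcongr
  rw [norm_inv, norm_inv, ← Rat.norm_cast_real, ← Rat.norm_cast_real, Rat.cast_natCast,
    Rat.cast_natCast, Real.norm_natCast, Real.norm_natCast]
  gcongr
  exact n.le_succ

theorem exp_sub_one_eq_tsum_mul (x : 𝔸) :
    exp x - 1 = (∑' n, ((n + 1)!⁻¹ : ℚ) • x ^ n) * x := by
  have hexp := (hasSum_nat_add_iff' 1).mpr (exp_series_hasSum_exp' (𝕂 := ℚ) x)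
  simp only [Finset.range_one, Finset.sum_singleton, factorial_zero, cast_one, inv_one, pow_zero,
    one_smul, pow_succ, ← smul_mul_assoc] at hexp
  exact hexp.unique ((summable_inv_factorial_succ_smul_pow x).hasSum.mul_right x)

theorem star_exp_mul_mul_exp_of_semiconjBy [StarRing 𝔸] [ContinuousStar 𝔸] {j x : 𝔸}
    (h : SemiconjBy j x (-star x)) : star (exp x) * j * exp x = j := by
  simpa [star_exp] using h.exp_neg_mul_mul_exp_eq_self

end NormedSpace

/-- the exponential of an element of `sp₂(H)` lies in `Sp₂(H)`. -/
theorem exp_mem_Sp2 (b : HilbertBasis ι ℝ H) (J : H →L[ℝ] H) (hJ : IsCplxStruct J)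
    (x : H →L[ℝ] H) (hx : x ∈ sp2 b J) :
    NormedSpace.exp x ∈ Sp2 b J := by
  let : NormedAlgebra ℚ (H →L[ℝ] H) := .restrictScalars ℚ ℝ (H →L[ℝ] H)
  obtain ⟨hxHS, hxJ⟩ := hx
  have hsx : star x = J * x * J := by
    rw [mul_assoc, hxJ, mul_neg, ← mul_assoc, hJ.1, neg_one_mul, neg_neg]
  have hJx : SemiconjBy J x (-star x) := by
    rw [SemiconjBy, hsx, neg_mul, mul_assoc, hJ.1, mul_neg_one, neg_neg]
  refine ⟨⟨NormedSpace.isUnit_exp x, NormedSpace.star_exp_mul_mul_exp_of_semiconjBy hJx⟩, ?_⟩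
  rw [NormedSpace.exp_sub_one_eq_tsum_mul]
  exact hxHS.mul_left _

end
end

section
/- A smooth curve α in Sp₂⁺(H) is a geodesic for the Levi-Civita connection of the ambient trace metric (obtained by orthogonally projecting the second derivative onto the tangent space) if and only if it satisfies the differential equation α α̈ α + J α̈ J = 0. -/
open scoped RealInnerProductSpace
open ContinuousLinearMap

noncomputable section

variable {ι H : Type*} [NormedAddCommGroup H] [InnerProductSpace ℝ H] [CompleteSpace H]

set_option synthInstance.maxHeartbeats 1000000
set_option maxHeartbeats 1000000

lemma exp_decay_bound (A : H →L[ℝ] H) (m : ℝ)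
    (hco : ∀ v : H, m * ‖v‖ ^ 2 ≤ ⟪A v, v⟫) {t : ℝ} (ht : 0 ≤ t) :
    ‖NormedSpace.exp (t • (-A))‖ ≤ Real.exp (-(m * t)) := by
  set e : ℝ → H →L[ℝ] H := fun s => NormedSpace.exp (s • (-A)) with he
  have heA : ∀ s : ℝ, HasDerivAt e (e s * (-A)) s := fun s =>
    hasDerivAt_exp_smul_const (-A) s
  have hcomm : ∀ s : ℝ, A * e s = e s * A := fun s =>
    ((((Commute.refl A).neg_right).smul_right s).exp_right).eq
  refine ContinuousLinearMap.opNorm_le_bound _ (Real.exp_pos _).le fun v => ?_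
  have hu : ∀ s : ℝ, HasDerivAt (fun s => (e s) v) (-((e s) (A v))) s := by
    intro s
    have h := (heA s).clm_apply (hasDerivAt_const s v)
    simpa using h
  have hn : ∀ s : ℝ, HasDerivAt (fun s => ⟪(e s) v, (e s) v⟫)
      (⟪(e s) v, -((e s) (A v))⟫ + ⟪-((e s) (A v)), (e s) v⟫) s := fun s =>
    (hu s).inner ℝ (hu s)
  set φ : ℝ → ℝ := fun s => Real.exp (2 * m * s) * ⟪(e s) v, (e s) v⟫ with hφdef
  have hφd : ∀ s : ℝ, HasDerivAt φ
      ((Real.exp (2 * m * s) * (2 * m)) * ⟪(e s) v, (e s) v⟫ +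
        Real.exp (2 * m * s) * (⟪(e s) v, -((e s) (A v))⟫ + ⟪-((e s) (A v)), (e s) v⟫)) s := by
    intro s
    have h1 : HasDerivAt (fun s : ℝ => Real.exp (2 * m * s)) (Real.exp (2 * m * s) * (2 * m)) s := by
      have := ((hasDerivAt_id' s).const_mul (2 * m)).exp
      simpa only [mul_one] using this
    exact h1.mul (hn s)
  have hder_nonpos : ∀ s : ℝ, deriv φ s ≤ 0 := by
    intro s
    rw [(hφd s).deriv]
    have hAe : (e s) (A v) = A ((e s) v) := by
      have := congrArg (fun f : H →L[ℝ] H => f v) (hcomm s)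
      simpa [ContinuousLinearMap.mul_apply] using this.symm
    have h2 := hco ((e s) v)
    rw [real_inner_self_eq_norm_sq]
    have h3 : ⟪(e s) v, -((e s) (A v))⟫ + ⟪-((e s) (A v)), (e s) v⟫
        = -(2 * ⟪A ((e s) v), (e s) v⟫) := by
      rw [hAe, inner_neg_left, inner_neg_right, real_inner_comm]; ring
    rw [h3]
    have hE := Real.exp_pos (2 * m * s)
    nlinarith [hE]
  have hanti : Antitone φ :=
    antitone_of_deriv_nonpos (fun s => (hφd s).differentiableAt) hder_nonpos
  have hφ0 : φ 0 = ‖v‖ ^ 2 := by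
    simp [hφdef, he, real_inner_self_eq_norm_sq]
  have hmono : Real.exp (2 * m * t) * ‖(e t) v‖ ^ 2 ≤ ‖v‖ ^ 2 := by
    have h := hanti ht
    rw [hφ0] at h
    simpa only [hφdef, real_inner_self_eq_norm_sq] using h
  have key : ‖(e t) v‖ ^ 2 ≤ (Real.exp (-(m * t)) * ‖v‖) ^ 2 := by
    have hE := Real.exp_pos (m * t)
    have h2 : Real.exp (2 * m * t) = Real.exp (m * t) ^ 2 := by
      rw [sq, ← Real.exp_add]; ring_nf
    have h3 : Real.exp (-(m * t)) = (Real.exp (m * t))⁻¹ := Real.exp_neg _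
    rw [mul_pow, h3]
    rw [h2] at hmono
    rw [inv_pow, ← div_eq_inv_mul, le_div_iff₀ (by positivity)]
    nlinarith [hmono]
  have := (pow_le_pow_iff_left₀ (norm_nonneg _) (by positivity) (two_ne_zero)).mp key
  simpa only [he, smul_neg] using this

lemma sylvester_isUnit (A B : H →L[ℝ] H) (mA mB : ℝ) (hmA : 0 < mA) (hmB : 0 < mB)
    (hAco : ∀ v : H, mA * ‖v‖ ^ 2 ≤ ⟪A v, v⟫) (hBco : ∀ v : H, mB * ‖v‖ ^ 2 ≤ ⟪B v, v⟫) :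
    IsUnit (LinearMap.mulLeft ℝ A + LinearMap.mulRight ℝ B : Module.End ℝ (H →L[ℝ] H)) := by
  set eA : ℝ → H →L[ℝ] H := fun s => NormedSpace.exp (s • (-A)) with heAdef
  set eB : ℝ → H →L[ℝ] H := fun s => NormedSpace.exp (s • (-B)) with heBdef
  have heA : ∀ s : ℝ, HasDerivAt eA (eA s * (-A)) s := fun s => hasDerivAt_exp_smul_const (-A) s
  have heB : ∀ s : ℝ, HasDerivAt eB (eB s * (-B)) s := fun s => hasDerivAt_exp_smul_const (-B) s
  have hcommA : ∀ s : ℝ, A * eA s = eA s * A := fun s =>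
    ((((Commute.refl A).neg_right).smul_right s).exp_right).eq
  have hcommB : ∀ s : ℝ, B * eB s = eB s * B := fun s =>
    ((((Commute.refl B).neg_right).smul_right s).exp_right).eq
  have hcontA : Continuous eA := continuous_iff_continuousAt.2 fun s => (heA s).continuousAt
  have hcontB : Continuous eB := continuous_iff_continuousAt.2 fun s => (heB s).continuousAt
  set G : (H →L[ℝ] H) → ℝ → H →L[ℝ] H := fun C t => eA t * C * eB t with hGdef
  have hGcont : ∀ C, Continuous (G C) := fun C => (hcontA.mul continuous_const).mul hcontB
  have hGbound : ∀ C, ∀ s : ℝ, 0 ≤ s → ‖G C s‖ ≤ ‖C‖ * Real.exp (-(mA + mB) * s) := by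
    intro C s hs
    have h1 := exp_decay_bound A mA hAco hs
    have h2 := exp_decay_bound B mB hBco hs
    have e1 : (0:ℝ) ≤ Real.exp (-(mA * s)) := (Real.exp_pos _).le
    calc ‖eA s * C * eB s‖ ≤ ‖eA s * C‖ * ‖eB s‖ := norm_mul_le _ _
      _ ≤ (‖eA s‖ * ‖C‖) * ‖eB s‖ := by
          exact mul_le_mul_of_nonneg_right (norm_mul_le _ _) (norm_nonneg _)
      _ ≤ (Real.exp (-(mA * s)) * ‖C‖) * Real.exp (-(mB * s)) := by
          apply mul_le_mul (mul_le_mul_of_nonneg_right h1 (norm_nonneg _)) h2 (norm_nonneg _)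
          positivity
      _ = ‖C‖ * Real.exp (-(mA + mB) * s) := by
          rw [mul_comm (Real.exp (-(mA * s))) ‖C‖, mul_assoc, ← Real.exp_add]
          ring_nf
  have hGint : ∀ C, MeasureTheory.IntegrableOn (G C) (Set.Ioi (0:ℝ)) := by
    intro C
    apply MeasureTheory.Integrable.mono'
      ((exp_neg_integrableOn_Ioi 0 (show (0:ℝ) < mA + mB by positivity)).const_mul ‖C‖)
      ((hGcont C).aestronglyMeasurable)
    filter_upwards [MeasureTheory.ae_restrict_mem measurableSet_Ioi] with s hs
    simpa [neg_mul, mul_assoc] using hGbound C s (le_of_lt hs)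
  have hGadd : ∀ C D t, G (C + D) t = G C t + G D t := by
    intro C D t; simp only [hGdef]; rw [mul_add, add_mul]
  have hGsmul : ∀ (c : ℝ) C t, G (c • C) t = c • G C t := by
    intro c C t; simp only [hGdef, mul_smul_comm, smul_mul_assoc]
  have hG0 : ∀ C, G C 0 = C := by
    intro C
    simp only [hGdef, heAdef, heBdef, zero_smul, NormedSpace.exp_zero, one_mul, mul_one]
  have hGtend : ∀ C, Filter.Tendsto (G C) Filter.atTop (nhds 0) := by
    intro C
    apply squeeze_zero_norm' (a := fun s => ‖C‖ * Real.exp (-(mA + mB) * s))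
    · filter_upwards [Filter.eventually_ge_atTop (0:ℝ)] with s hs
      exact hGbound C s hs
    · have h1 : Filter.Tendsto (fun s : ℝ => (mA + mB) * s) Filter.atTop Filter.atTop :=
        Filter.Tendsto.const_mul_atTop (by positivity) Filter.tendsto_id
      have h2 := (Real.tendsto_exp_neg_atTop_nhds_zero.comp h1).const_mul ‖C‖
      have h4 : (fun s : ℝ => ‖C‖ * Real.exp (-(mA + mB) * s))
          = fun s : ℝ => ‖C‖ * Real.exp (-((mA + mB) * s)) := by
        funext s; rw [neg_mul]
      rw [h4]
      simpa [Function.comp] using h2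
  have hGderiv : ∀ C (t : ℝ), HasDerivAt (G C) (-(G (A * C + C * B) t)) t := by
    intro C t
    have h := ((heA t).mul_const C).mul (heB t)
    have h2 : eA t * (-A) * C * eB t + eA t * C * (eB t * (-B)) = -(G (A * C + C * B) t) := by
      simp only [hGdef]
      rw [show eB t * (-B) = -(B * eB t) from by rw [mul_neg, ← hcommB t]]
      rw [show eA t * (-A) = -(eA t * A) from mul_neg _ _]
      noncomm_ring
    exact h2 ▸ h
  have hkey : ∀ C, (∫ t in Set.Ioi (0:ℝ), G (A * C + C * B) t) = C := by
    intro C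
    have h := MeasureTheory.integral_Ioi_of_hasDerivAt_of_tendsto
      ((hGcont C).continuousWithinAt) (fun s _ => hGderiv C s)
      ((hGint (A * C + C * B)).neg) (hGtend C)
    rw [MeasureTheory.integral_neg, hG0, zero_sub] at h
    exact neg_injective h
  set Φ : (H →L[ℝ] H) → H →L[ℝ] H := fun C => ∫ t in Set.Ioi (0:ℝ), G C t with hΦdef
  have hmulL : ∀ C, A * Φ C = Φ (A * C) := by
    intro C
    have h := (ContinuousLinearMap.mul ℝ (H →L[ℝ] H) A).integral_comp_comm (hGint C)
    simp only [ContinuousLinearMap.mul_apply'] at h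
    have h2 : ∀ t : ℝ, A * G C t = G (A * C) t := by
      intro t
      simp only [hGdef]
      calc A * (eA t * C * eB t) = (A * eA t) * C * eB t := by noncomm_ring
        _ = (eA t * A) * C * eB t := by rw [hcommA t]
        _ = eA t * (A * C) * eB t := by noncomm_ring
    rw [show (fun t => A * G C t) = fun t => G (A * C) t from funext h2] at h
    exact h.symm
  have hmulR : ∀ C, Φ C * B = Φ (C * B) := by
    intro C
    have h := ((ContinuousLinearMap.mul ℝ (H →L[ℝ] H)).flip B).integral_comp_comm (hGint C)
    simp only [ContinuousLinearMap.flip_apply, ContinuousLinearMap.mul_apply'] at h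
    have h2 : ∀ t : ℝ, G C t * B = G (C * B) t := by
      intro t
      simp only [hGdef]
      calc eA t * C * eB t * B = eA t * C * (eB t * B) := by noncomm_ring
        _ = eA t * C * (B * eB t) := by rw [hcommB t]
        _ = eA t * (C * B) * eB t := by noncomm_ring
    rw [show (fun t => G C t * B) = fun t => G (C * B) t from funext h2] at h
    exact h.symm
  have hTΦ : ∀ C, A * Φ C + Φ C * B = C := by
    intro C
    rw [hmulL C, hmulR C]
    have := MeasureTheory.integral_add (hGint (A * C)) (hGint (C * B))
    calc Φ (A * C) + Φ (C * B)
        = ∫ t in Set.Ioi (0:ℝ), (G (A * C) t + G (C * B) t) := this.symm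
      _ = ∫ t in Set.Ioi (0:ℝ), G (A * C + C * B) t := by
          congr 1; funext t; exact (hGadd _ _ t).symm
      _ = C := hkey C
  refine isUnit_iff_exists.mpr ⟨{ toFun := Φ, map_add' := ?_, map_smul' := ?_ }, ?_, ?_⟩
  · intro C D
    simp only [hΦdef, hGadd]
    exact MeasureTheory.integral_add (hGint C) (hGint D)
  · intro c C
    simp only [hΦdef, hGsmul, RingHom.id_apply]
    exact MeasureTheory.integral_smul c _
  · apply LinearMap.ext
    intro C
    simp only [Module.End.mul_apply, LinearMap.coe_mk, AddHom.coe_mk, LinearMap.add_apply,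
      LinearMap.mulLeft_apply, LinearMap.mulRight_apply, Module.End.one_apply]
    exact hTΦ C
  · apply LinearMap.ext
    intro C
    simp only [Module.End.mul_apply, LinearMap.coe_mk, AddHom.coe_mk, LinearMap.add_apply,
      LinearMap.mulLeft_apply, LinearMap.mulRight_apply, Module.End.one_apply]
    exact hkey C

lemma projection_unit_main (J : H →L[ℝ] H) (hJJ : J * J = -1) (h : H →L[ℝ] H)
    (hnt : Nontrivial H)
    (hu : IsUnit h) (hsa : star h = h) (hJh : h * J * h = J)
    (PiL : (H →L[ℝ] H) → Module.End ℝ (H →L[ℝ] H))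
    (hPiL : ∀ g : H →L[ℝ] H, PiL g = (1/2 : ℝ) •
      (LinearMap.id + (LinearMap.mulLeft ℝ (g * J)) ∘ₗ (LinearMap.mulRight ℝ (J * g)))) :
    IsUnit (PiL h + PiL (Ring.inverse h) - 1) ∧
      ∀ x : H →L[ℝ] H, (PiL (Ring.inverse h)) x = 0 ↔ h * x * h + J * x * J = 0 := by
  set h' := Ring.inverse h with hh'
  have hh1 : h * h' = 1 := Ring.mul_inverse_cancel h hu
  have hh2 : h' * h = 1 := Ring.inverse_mul_cancel h hu
  have hsa' : star h' = h' := by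
    have hst : star h' * h = 1 := by
      have := congrArg star hh1
      rwa [star_mul, hsa, star_one] at this
    calc star h' = star h' * (h * h') := by rw [hh1, mul_one]
      _ = (star h' * h) * h' := by rw [mul_assoc]
      _ = h' := by rw [hst, one_mul]
  have hJh' : h' * J * h' = J := by
    calc h' * J * h' = h' * (h * J * h) * h' := by rw [hJh]
      _ = (h' * h) * J * (h * h') := by noncomm_ring
      _ = J := by rw [hh1, hh2, one_mul, mul_one]
  have e2 : h' * J = J * h := by
    have h3 := congrArg (· * h) hJh'
    simpa [mul_assoc, hh2] using h3
  have e3 : J * h' = h * J := by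
    have h3 := congrArg (h * ·) hJh'
    simpa [← mul_assoc, hh1] using h3
  -- nonvanishing norms
  have hne : (1 : H →L[ℝ] H) ≠ 0 := by
    obtain ⟨v, hv⟩ := exists_ne (0 : H)
    intro hcon
    apply hv
    have := congrArg (fun f : H →L[ℝ] H => f v) hcon
    simpa using this
  have hh0 : h ≠ 0 := by
    intro h0
    apply hne
    rw [← hh1, h0, zero_mul]
  have hh0' : h' ≠ 0 := by
    intro h0
    apply hne
    rw [← hh2, h0, zero_mul]
  have hnpos : 0 < ‖h‖ := norm_pos_iff.mpr hh0
  have hnpos' : 0 < ‖h'‖ := norm_pos_iff.mpr hh0'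
  -- symmetry
  have hadj : ContinuousLinearMap.adjoint h = h := by
    rw [← ContinuousLinearMap.star_eq_adjoint, hsa]
  have hadj' : ContinuousLinearMap.adjoint h' = h' := by
    rw [← ContinuousLinearMap.star_eq_adjoint, hsa']
  have hsym : ∀ u w : H, ⟪h u, w⟫ = ⟪u, h w⟫ := by
    intro u w
    conv_lhs => rw [← hadj]
    exact ContinuousLinearMap.adjoint_inner_left h w u
  have hsym' : ∀ u w : H, ⟪h' u, w⟫ = ⟪u, h' w⟫ := by
    intro u w
    conv_lhs => rw [← hadj']
    exact ContinuousLinearMap.adjoint_inner_left h' w u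
  -- coercivity
  have hcoA : ∀ v : H, (‖h‖ ^ 2)⁻¹ * ‖v‖ ^ 2 ≤ ⟪(h' * h') v, v⟫ := by
    intro v
    have h1 : ⟪(h' * h') v, v⟫ = ‖h' v‖ ^ 2 := by
      rw [ContinuousLinearMap.mul_apply, hsym' (h' v) v, real_inner_self_eq_norm_sq]
    have h2 : ‖v‖ ≤ ‖h‖ * ‖h' v‖ := by
      calc ‖v‖ = ‖h (h' v)‖ := by
            rw [← ContinuousLinearMap.mul_apply, hh1, ContinuousLinearMap.one_apply]
        _ ≤ ‖h‖ * ‖h' v‖ := le_opNorm h (h' v)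
    rw [h1, inv_mul_le_iff₀ (by positivity)]
    nlinarith [norm_nonneg (h' v), norm_nonneg v, norm_nonneg h]
  have hcoB : ∀ v : H, (‖h'‖ ^ 2)⁻¹ * ‖v‖ ^ 2 ≤ ⟪(h * h) v, v⟫ := by
    intro v
    have h1 : ⟪(h * h) v, v⟫ = ‖h v‖ ^ 2 := by
      rw [ContinuousLinearMap.mul_apply, hsym (h v) v, real_inner_self_eq_norm_sq]
    have h2 : ‖v‖ ≤ ‖h'‖ * ‖h v‖ := by
      calc ‖v‖ = ‖h' (h v)‖ := by
            rw [← ContinuousLinearMap.mul_apply, hh2, ContinuousLinearMap.one_apply]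
        _ ≤ ‖h'‖ * ‖h v‖ := le_opNorm h' (h v)
    rw [h1, inv_mul_le_iff₀ (by positivity)]
    nlinarith [norm_nonneg (h v), norm_nonneg v, norm_nonneg h']
  have hUnitT : IsUnit (LinearMap.mulLeft ℝ (h' * h') + LinearMap.mulRight ℝ (h * h) :
      Module.End ℝ (H →L[ℝ] H)) :=
    sylvester_isUnit (h' * h') (h * h) (‖h‖ ^ 2)⁻¹ (‖h'‖ ^ 2)⁻¹
      (inv_pos.mpr (by positivity)) (inv_pos.mpr (by positivity)) hcoA hcoB
  -- unit: mulLeft (h*h)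
  have c1 : h * h * h' = h := by rw [mul_assoc, hh1, mul_one]
  have c1' : h' * h' * h = h' := by rw [mul_assoc, hh2, mul_one]
  have hUnitMul : IsUnit (LinearMap.mulLeft ℝ (h * h) : Module.End ℝ (H →L[ℝ] H)) := by
    refine isUnit_iff_exists.mpr ⟨LinearMap.mulLeft ℝ (h' * h'), ?_, ?_⟩
    · apply LinearMap.ext; intro x
      simp only [Module.End.mul_apply, LinearMap.mulLeft_apply, Module.End.one_apply,
        ← mul_assoc, c1, hh1, one_mul]
    · apply LinearMap.ext; intro x
      simp only [Module.End.mul_apply, LinearMap.mulLeft_apply, Module.End.one_apply,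
        ← mul_assoc, c1', hh2, one_mul]
  have hUnitHalf : IsUnit ((1/2 : ℝ) • (LinearMap.mulLeft ℝ (h * h) *
      (LinearMap.mulLeft ℝ (h' * h') + LinearMap.mulRight ℝ (h * h)) :
        Module.End ℝ (H →L[ℝ] H))) := by
    obtain ⟨u, hu2⟩ := hUnitMul.mul hUnitT
    refine isUnit_iff_exists.mpr ⟨(2 : ℝ) • (↑u⁻¹ : Module.End ℝ (H →L[ℝ] H)), ?_, ?_⟩
    · rw [← hu2, smul_mul_assoc, mul_smul_comm, smul_smul, Units.mul_inv]
      norm_num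
    · rw [← hu2, smul_mul_assoc, mul_smul_comm, smul_smul, Units.inv_mul]
      norm_num
  set Lh : Module.End ℝ (H →L[ℝ] H) :=
    (LinearMap.mulLeft ℝ (h * J)) ∘ₗ (LinearMap.mulRight ℝ (J * h)) with hLh
  have k1 : (h * J) * (h * J) = -1 := by
    calc (h * J) * (h * J) = (h * J * h) * J := by noncomm_ring
      _ = J * J := by rw [hJh]
      _ = -1 := hJJ
  have k2 : (J * h) * (J * h) = -1 := by
    calc (J * h) * (J * h) = J * (h * J * h) := by noncomm_ring
      _ = J * J := by rw [hJh]
      _ = -1 := hJJ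
  have hLh2 : Lh * Lh = 1 := by
    apply LinearMap.ext; intro x
    simp only [hLh, Module.End.mul_apply, LinearMap.coe_comp, Function.comp_apply,
      LinearMap.mulLeft_apply, LinearMap.mulRight_apply, Module.End.one_apply]
    calc (h * J) * ((h * J) * (x * (J * h)) * (J * h))
        = ((h * J) * (h * J)) * x * ((J * h) * (J * h)) := by noncomm_ring
      _ = (-1) * x * (-1) := by rw [k1, k2]
      _ = x := by noncomm_ring
  have hUnitLh : IsUnit Lh := isUnit_iff_exists.mpr ⟨Lh, hLh2, hLh2⟩
  have kk' : (h * h) * (h' * h') = 1 := by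
    calc (h * h) * (h' * h') = h * ((h * h') * h') := by noncomm_ring
      _ = 1 := by rw [hh1, one_mul, hh1]
  -- the factorization
  have hEqW : PiL h + PiL h' - 1 = Lh * ((1/2 : ℝ) • (LinearMap.mulLeft ℝ (h * h) *
      (LinearMap.mulLeft ℝ (h' * h') + LinearMap.mulRight ℝ (h * h)))) := by
    rw [hPiL h, hPiL h']
    apply LinearMap.ext; intro x
    simp only [hLh, Module.End.mul_apply, LinearMap.smul_apply, LinearMap.add_apply,
      LinearMap.sub_apply, LinearMap.coe_comp, Function.comp_apply, LinearMap.mulLeft_apply,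
      LinearMap.mulRight_apply, Module.End.one_apply, LinearMap.id_coe, id_eq, map_smul,
      smul_add, mul_add]
    have expand : (h * J) * ((h * h) * ((h' * h') * x) * (J * h))
        + (h * J) * ((h * h) * (x * (h * h)) * (J * h))
        = (h * J) * (x * (J * h)) + (h' * J) * (x * (J * h')) := by
      have step1 : (h * J) * ((h * h) * ((h' * h') * x) * (J * h))
          = (h * J) * ((((h * h) * (h' * h')) * x) * (J * h)) := by noncomm_ring
      have step2 : (h * J) * ((h * h) * (x * (h * h)) * (J * h))
          = (h * J * h) * (h * x * h) * (h * J * h) := by noncomm_ring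
      rw [step1, step2, kk', hJh, one_mul]
      congr 1
      calc J * (h * x * h) * J = (J * h) * x * (h * J) := by noncomm_ring
        _ = (h' * J) * x * (J * h') := by rw [← e2, ← e3]
        _ = (h' * J) * (x * (J * h')) := by noncomm_ring
    rw [show (1/2:ℝ) • (h * J * (h * h * (h' * h' * x) * (J * h)))
        + (1/2:ℝ) • (h * J * (h * h * (x * (h * h)) * (J * h)))
        = (1/2:ℝ) • (h * J * (x * (J * h)) + h' * J * (x * (J * h')))
      from by rw [← smul_add, expand]]
    module
  have hUnitA : IsUnit (PiL h + PiL h' - 1) := by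
    rw [hEqW]; exact hUnitLh.mul hUnitHalf
  refine ⟨hUnitA, fun x => ?_⟩
  have hhalf : (PiL h') x = (1/2 : ℝ) • (x + (h' * J) * (x * (J * h'))) := by
    rw [hPiL h']
    simp only [LinearMap.smul_apply, LinearMap.add_apply, LinearMap.coe_comp,
      Function.comp_apply, LinearMap.mulLeft_apply, LinearMap.mulRight_apply,
      LinearMap.id_coe, id_eq]
  have I1 : h * (x + (h' * J) * (x * (J * h'))) * h = h * x * h + J * x * J := by
    have : h * ((h' * J) * (x * (J * h'))) * h = (h * h') * (J * x * J) * (h' * h) := by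
      noncomm_ring
    rw [mul_add, add_mul, this, hh1, hh2, one_mul, mul_one]
  have I2 : h' * (h * x * h + J * x * J) * h' = x + (h' * J) * (x * (J * h')) := by
    have e4 : h' * (h * x * h) * h' = (h' * h) * x * (h * h') := by noncomm_ring
    have e5 : h' * (J * x * J) * h' = (h' * J) * (x * (J * h')) := by noncomm_ring
    rw [mul_add, add_mul, e4, e5, hh1, hh2, one_mul, mul_one]
  rw [hhalf, smul_eq_zero]
  constructor
  · intro hc
    rcases hc with hc | hc
    · norm_num at hc
    · rw [← I1, hc, mul_zero, zero_mul]
  · intro hc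
    right
    rw [← I2, hc, mul_zero, zero_mul]

set_option synthInstance.maxHeartbeats 1000000 in
/-- a smooth curve in `Sp₂⁺(H)` is a geodesic of the ambient trace
metric iff `α α̈ α + J α̈ J = 0`. -/
theorem geodesic_iff_equation (b : HilbertBasis ι ℝ H) (J : H →L[ℝ] H)
    (hJ : IsCplxStruct J) (α : ℝ → H →L[ℝ] H) (hα : ContDiff ℝ (⊤ : ℕ∞) α)
    (hmem : ∀ t : ℝ, α t ∈ Sp2pos b J)
    (PiL : (H →L[ℝ] H) → Module.End ℝ (H →L[ℝ] H))
    (hPiL : ∀ h : H →L[ℝ] H, PiL h = (1/2 : ℝ) •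
      (LinearMap.id + (LinearMap.mulLeft ℝ (h * J)) ∘ₗ (LinearMap.mulRight ℝ (J * h))))
    (E : (H →L[ℝ] H) → Module.End ℝ (H →L[ℝ] H))
    (hE : ∀ h : H →L[ℝ] H,
      E h = Ring.inverse (PiL h + PiL (Ring.inverse h) - 1) * PiL (Ring.inverse h)) :
    (∀ t : ℝ, E (α t) (deriv (deriv α) t) = 0) ↔
    (∀ t : ℝ, α t * deriv (deriv α) t * α t + J * deriv (deriv α) t * J = 0) := by
  rcases subsingleton_or_nontrivial H with hH | hH
  · haveI : Subsingleton (H →L[ℝ] H) :=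
      ⟨fun f g => ContinuousLinearMap.ext fun v => Subsingleton.elim _ _⟩
    constructor <;> intro _ t <;> exact Subsingleton.elim _ _
  have main : ∀ t : ℝ, (E (α t) (deriv (deriv α) t) = 0 ↔
      α t * deriv (deriv α) t * α t + J * deriv (deriv α) t * J = 0) := by
    intro t
    obtain ⟨⟨⟨hu, hsymp⟩, -⟩, hpos⟩ := hmem t
    have hsa : star (α t) = α t := hpos.isSelfAdjoint.star_eq
    have hJh : α t * J * α t = J := by rw [hsa] at hsymp; exact hsymp
    obtain ⟨hUnitA, hiff⟩ := projection_unit_main J hJ.1 (α t) hH hu hsa hJh PiL hPiL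
    rw [hE (α t)]
    set x := deriv (deriv α) t with hx
    constructor
    · intro h0
      have hP : (PiL (Ring.inverse (α t))) x = 0 := by
        have h1 : (PiL (α t) + PiL (Ring.inverse (α t)) - 1) *
            Ring.inverse (PiL (α t) + PiL (Ring.inverse (α t)) - 1) = 1 :=
          Ring.mul_inverse_cancel _ hUnitA
        calc (PiL (Ring.inverse (α t))) x
            = ((PiL (α t) + PiL (Ring.inverse (α t)) - 1) *
                Ring.inverse (PiL (α t) + PiL (Ring.inverse (α t)) - 1))
                ((PiL (Ring.inverse (α t))) x) := by rw [h1, Module.End.one_apply]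
          _ = (PiL (α t) + PiL (Ring.inverse (α t)) - 1)
              ((Ring.inverse (PiL (α t) + PiL (Ring.inverse (α t)) - 1) *
                PiL (Ring.inverse (α t))) x) := rfl
          _ = 0 := by rw [h0, map_zero]
      exact (hiff x).mp hP
    · intro h0
      rw [Module.End.mul_apply, (hiff x).mpr h0, map_zero]
  exact ⟨fun hg t => (main t).mp (hg t), fun hg t => (main t).mpr (hg t)⟩

end
end

section
/- If v ∈ sp₂(H) is a normal operator and v = x + y is its decomposition into Hermitian part x and anti-Hermitian part y, then x commutes with y, and consequently e^{tv*} e^{t(v - v*)} = e^{tv} = e^{tx} e^{ty} for all t; i.e. geodesics of the left-invariant metric with normal initial speed are one-parameter groups. -/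
open scoped RealInnerProductSpace
open ContinuousLinearMap

noncomputable section

variable {ι H : Type*} [NormedAddCommGroup H] [InnerProductSpace ℝ H] [CompleteSpace H]

theorem commute_add_star_sub_star {R : Type*} [Ring R] [StarRing R] {a : R}
    (h : Commute a (star a)) : Commute (a + star a) (a - star a) :=
  ((Commute.refl a).add_left h.symm).sub_right (h.add_left (Commute.refl _))

namespace NormedSpace

variable {𝔸 : Type*} [NormedRing 𝔸] [CompleteSpace 𝔸]

/-- `exp_add_of_commute` asks for a `NormedAlgebra ℚ 𝔸` instance, which `H →L[ℝ] H` lacks. -/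
theorem exp_add_of_commute_of_rclike (𝕂 : Type*) [RCLike 𝕂] [NormedAlgebra 𝕂 𝔸]
    {a b : 𝔸} (h : Commute a b) :
    exp (a + b) = exp a * exp b := by
  have mem_ball (c : 𝔸) : c ∈ Metric.eball (0 : 𝔸) (expSeries 𝕂 𝔸).radius := by
    simp [expSeries_radius_eq_top]
  exact exp_add_of_commute_of_mem_ball h (mem_ball a) (mem_ball b)

theorem exp_mul_exp_sub_of_commute_of_rclike (𝕂 : Type*) [RCLike 𝕂] [NormedAlgebra 𝕂 𝔸]
    {a b : 𝔸} (h : Commute a b) : exp b * exp (a - b) = exp a := by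
  rw [← exp_add_of_commute_of_rclike 𝕂 (h.symm.sub_right (Commute.refl b)), add_sub_cancel]

end NormedSpace

theorem normal_speed_one_parameter_group_general (v : H →L[ℝ] H)
    (hnormal : v * star v = star v * v)
    (x y : H →L[ℝ] H)
    (hx : x = (1/2 : ℝ) • (v + star v)) (hy : y = (1/2 : ℝ) • (v - star v)) :
    x * y = y * x ∧ ∀ t : ℝ,
      NormedSpace.exp (t • star v) * NormedSpace.exp (t • (v - star v)) =
        NormedSpace.exp (t • v) ∧
      NormedSpace.exp (t • v) = NormedSpace.exp (t • x) * NormedSpace.exp (t • y) := by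
  have hvv : Commute v (star v) := hnormal
  have hxy : Commute x y := by
    subst hx hy
    exact ((commute_add_star_sub_star hvv).smul_left _).smul_right _
  refine ⟨hxy, fun t => ⟨?_, ?_⟩⟩
  · rw [smul_sub]
    exact NormedSpace.exp_mul_exp_sub_of_commute_of_rclike ℝ ((hvv.smul_left t).smul_right t)
  · rw [← NormedSpace.exp_add_of_commute_of_rclike ℝ ((hxy.smul_left t).smul_right t),
      ← smul_add, hx, hy]
    congr 1
    module

/-- for normal `v ∈ sp₂(H)` the Hermitian and anti-Hermitian parts
commute, and the geodesics with normal initial speed are one-parameter groups. -/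
theorem normal_speed_one_parameter_group (b : HilbertBasis ι ℝ H) (J : H →L[ℝ] H)
    (hJ : IsCplxStruct J) (v : H →L[ℝ] H) (hv : v ∈ sp2 b J)
    (hnormal : v * star v = star v * v)
    (x y : H →L[ℝ] H)
    (hx : x = (1/2 : ℝ) • (v + star v)) (hy : y = (1/2 : ℝ) • (v - star v)) :
    x * y = y * x ∧ ∀ t : ℝ,
      NormedSpace.exp (t • star v) * NormedSpace.exp (t • (v - star v)) =
        NormedSpace.exp (t • v) ∧
      NormedSpace.exp (t • v) = NormedSpace.exp (t • x) * NormedSpace.exp (t • y) :=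
  normal_speed_one_parameter_group_general v hnormal x y hx hy

end
end
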